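/- Let s, g ∈ ℝ and define the Stark first integral Ã(q,p) := (q₁p₂ − q₂p₁)·p₂ − s·q₁/√(q₁² + q₂²) + (g/2)·q₂² for q ∈ ℝ² \ {0}, p ∈ ℝ². Then: (i) for every twice-differentiable curve q : I → ℝ² \ {0} satisfying the Stark equations q₁''(t) = g − s·q₁(t)/‖q(t)‖³ and q₂''(t) = −s·q₂(t)/‖q(t)‖³, the function t ↦ Ã(q(t), q'(t)) is constant; (ii) for every c ≠ 0 and every point q ≠ 0 on either focused parabola {q₁ = c² − q₂²/(4c²)} or {q₁ = q₂²/(4c²) − c²}, the elastic reflection p' of any p ∈ ℝ² at that parabola at q satisfies Ã(q,p') = Ã(q,p). Hence the Stark problem admits any focused parabola with the q₁-axis as its axis as an integrable reflection wall. -/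

import Mathlib

/-
Along a Stark trajectory the angular momentum `L = q₁p₂ − q₂p₁` has `L' = −g q₂`, since the
central force exerts no torque; with this the time derivatives of `L p₂`, `−s q₁/‖q‖` and
`(g/2) q₂²` cancel. A reflection changes only `p`, and the `p`-dependent part of `starkA` is the
quadratic form `p ↦ L p₂`; at a point of a focused parabola with axis `q₁` the normal of the
wall is an eigenvector of this form, so the reflection preserves it.
-/

/-- The Stark first integral
`Ã(q,p) = (q₁p₂ − q₂p₁)·p₂ − s·q₁/√(q₁²+q₂²) + (g/2)·q₂²`. -/
noncomputable def starkA (s g : ℝ) (q p : ℝ × ℝ) : ℝ :=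
  (q.1 * p.2 - q.2 * p.1) * p.2 - s * q.1 / Real.sqrt (q.1 ^ 2 + q.2 ^ 2)
    + g / 2 * q.2 ^ 2

open Real

noncomputable def starkAccel (s g : ℝ) (q : ℝ × ℝ) : ℝ × ℝ :=
  (g - s * q.1 / √(q.1 ^ 2 + q.2 ^ 2) ^ 3, -(s * q.2 / √(q.1 ^ 2 + q.2 ^ 2) ^ 3))

/-- Derivative of `starkA s g` at `(q, p)` in the direction `(w, a)`. -/
noncomputable def starkADeriv (s g : ℝ) (q p w a : ℝ × ℝ) : ℝ :=
  ((w.1 * p.2 + q.1 * a.2) - (w.2 * p.1 + q.2 * a.1)) * p.2 + (q.1 * p.2 - q.2 * p.1) * a.2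
    - s * (w.1 * (q.1 ^ 2 + q.2 ^ 2) - q.1 * (q.1 * w.1 + q.2 * w.2))
      / √(q.1 ^ 2 + q.2 ^ 2) ^ 3
    + g * q.2 * w.2

noncomputable def elasticReflection (n p : ℝ × ℝ) : ℝ × ℝ :=
  p - (2 * ((p.1 * n.1 + p.2 * n.2) / (n.1 ^ 2 + n.2 ^ 2))) • n

lemma Prod.sq_add_sq_pos {q : ℝ × ℝ} (hq : q ≠ 0) : 0 < q.1 ^ 2 + q.2 ^ 2 := by
  have : q.1 ≠ 0 ∨ q.2 ≠ 0 := by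
    contrapose! hq
    exact Prod.ext hq.1 hq.2
  rcases this with h | h <;> positivity

lemma Convex.eq_of_hasDerivWithinAt_zero {f : ℝ → ℝ} {I : Set ℝ} (hI : Convex ℝ I)
    (hf : ∀ t ∈ I, HasDerivWithinAt f 0 I t) {t t' : ℝ} (ht : t ∈ I) (ht' : t' ∈ I) :
    f t = f t' := by
  have h := hI.norm_image_sub_le_of_norm_hasDerivWithin_le (C := 0) hf (by simp) ht' ht
  rwa [zero_mul, norm_le_zero_iff, sub_eq_zero] at h

lemma hasDerivWithinAt_starkA (s g : ℝ) {q v : ℝ → ℝ × ℝ} {w a : ℝ × ℝ} {I : Set ℝ}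
    {t : ℝ} (hq0 : q t ≠ 0) (hq : HasDerivWithinAt q w I t) (hv : HasDerivWithinAt v a I t) :
    HasDerivWithinAt (fun u => starkA s g (q u) (v u)) (starkADeriv s g (q t) (v t) w a)
      I t := by
  have hr2 := Prod.sq_add_sq_pos hq0
  have hr : √((q t).1 ^ 2 + (q t).2 ^ 2) ≠ 0 := (Real.sqrt_pos.mpr hr2).ne'
  have hq1 : HasDerivWithinAt (fun u => (q u).1) w.1 I t :=
    (ContinuousLinearMap.fst ℝ ℝ ℝ).hasFDerivAt.comp_hasDerivWithinAt t hq
  have hq2 : HasDerivWithinAt (fun u => (q u).2) w.2 I t :=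
    (ContinuousLinearMap.snd ℝ ℝ ℝ).hasFDerivAt.comp_hasDerivWithinAt t hq
  have hv1 : HasDerivWithinAt (fun u => (v u).1) a.1 I t :=
    (ContinuousLinearMap.fst ℝ ℝ ℝ).hasFDerivAt.comp_hasDerivWithinAt t hv
  have hv2 : HasDerivWithinAt (fun u => (v u).2) a.2 I t :=
    (ContinuousLinearMap.snd ℝ ℝ ℝ).hasFDerivAt.comp_hasDerivWithinAt t hv
  have hnorm := ((hq1.pow 2).add (hq2.pow 2)).sqrt hr2.ne'
  refine ((((hq1.mul hv2).sub (hq2.mul hv1)).mul hv2).sub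
    ((hq1.const_mul s).div hnorm hr) |>.add ((hq2.pow 2).const_mul (g / 2))).congr_deriv ?_
  simp only [starkADeriv, Pi.mul_apply, Pi.sub_apply, Pi.add_apply, Pi.pow_apply]
  field_simp
  rw [Real.sq_sqrt hr2.le]
  ring

lemma starkADeriv_starkAccel (s g : ℝ) {q : ℝ × ℝ} (hq : q ≠ 0) (p : ℝ × ℝ) :
    starkADeriv s g q p p (starkAccel s g q) = 0 := by
  have hr : √(q.1 ^ 2 + q.2 ^ 2) ≠ 0 := (Real.sqrt_pos.mpr (Prod.sq_add_sq_pos hq)).ne'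
  simp only [starkADeriv, starkAccel]
  field_simp
  ring

/-- With `k = q₂ / (2a)` the point is `q = a (1 - k², 2k)`, and the normal `(1, k)` is an
eigenvector of the quadratic form `p ↦ (q₁p₂ − q₂p₁)p₂`, with eigenvalue `-a k²`. -/
lemma starkA_elasticReflection_of_parabola (s g : ℝ) {a : ℝ} (ha : a ≠ 0) {q : ℝ × ℝ}
    (hq : q.1 = a - q.2 ^ 2 / (4 * a)) (p : ℝ × ℝ) :
    starkA s g q (elasticReflection (1, q.2 / (2 * a)) p) = starkA s g q p := by
  have hn : (1 : ℝ) + (q.2 / (2 * a)) ^ 2 ≠ 0 := by positivity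
  simp only [starkA, elasticReflection, Prod.fst_sub, Prod.snd_sub, Prod.smul_mk, smul_eq_mul]
  rw [hq]
  field_simp
  ring

/-- The Stark problem `q₁'' = g − s·q₁/‖q‖³, q₂'' = −s·q₂/‖q‖³` admits any focused
parabola with the `q₁`-axis as its axis as an integrable reflection wall: `Ã` is
constant along Stark trajectories and invariant under elastic reflections at the
focused parabolae `{q₁ = c² − q₂²/(4c²)}` and `{q₁ = q₂²/(4c²) − c²}`. -/
theorem stmt_15 (s g : ℝ) :
    (∀ I : Set ℝ, Convex ℝ I → ∀ q v : ℝ → ℝ × ℝ,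
      (∀ t ∈ I, q t ≠ 0) →
      (∀ t ∈ I, HasDerivWithinAt q (v t) I t) →
      (∀ t ∈ I, HasDerivWithinAt v
        ((g - s * (q t).1 / Real.sqrt ((q t).1 ^ 2 + (q t).2 ^ 2) ^ 3,
          -(s * (q t).2 / Real.sqrt ((q t).1 ^ 2 + (q t).2 ^ 2) ^ 3)) : ℝ × ℝ) I t) →
      ∀ t ∈ I, ∀ t' ∈ I, starkA s g (q t) (v t) = starkA s g (q t') (v t')) ∧
    (∀ c : ℝ, c ≠ 0 → ∀ q p : ℝ × ℝ, q ≠ 0 →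
      q.1 = c ^ 2 - q.2 ^ 2 / (4 * c ^ 2) →
      ∀ n p' : ℝ × ℝ, n = (1, q.2 / (2 * c ^ 2)) →
      p' = p - (2 * ((p.1 * n.1 + p.2 * n.2) / (n.1 ^ 2 + n.2 ^ 2))) • n →
      starkA s g q p' = starkA s g q p) ∧
    (∀ c : ℝ, c ≠ 0 → ∀ q p : ℝ × ℝ, q ≠ 0 →
      q.1 = q.2 ^ 2 / (4 * c ^ 2) - c ^ 2 →
      ∀ n p' : ℝ × ℝ, n = (1, -q.2 / (2 * c ^ 2)) →
      p' = p - (2 * ((p.1 * n.1 + p.2 * n.2) / (n.1 ^ 2 + n.2 ^ 2))) • n →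
      starkA s g q p' = starkA s g q p) := by
  refine ⟨?_, ?_, ?_⟩
  · intro I hI q v hq0 hq hv t ht t' ht'
    refine hI.eq_of_hasDerivWithinAt_zero (f := fun u => starkA s g (q u) (v u))
      (fun u hu => ?_) ht ht'
    rw [← starkADeriv_starkAccel s g (hq0 u hu) (v u)]
    exact hasDerivWithinAt_starkA s g (hq0 u hu) (hq u hu) (hv u hu)
  · rintro c hc q p - hq n p' rfl rfl
    exact starkA_elasticReflection_of_parabola s g (pow_ne_zero 2 hc) hq p
  · rintro c hc q p - hq n p' rfl rfl
    have hq' : q.1 = -c ^ 2 - q.2 ^ 2 / (4 * -c ^ 2) := by rw [hq]; ring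
    have hn : -q.2 / (2 * c ^ 2) = q.2 / (2 * -c ^ 2) := by ring
    rw [hn]
    exact starkA_elasticReflection_of_parabola s g (neg_ne_zero.mpr (pow_ne_zero 2 hc)) hq' p
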